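/- arXiv:2202.10759 — 2 statements merged into one kernel-verified Lean document; each statement's English description precedes it below -/
import Mathlib

section
/- Let f : ℕ≥1 → ℕ≥1 assign to each n its largest square-free divisor d of n satisfying gcd(d, n/d) = 1 (i.e., the product of primes dividing n exactly once). Then for all X ≥ 2, ∑_{n ≤ X} f(n)^{-1/4} ≪ X^{3/4}, with an absolute implied constant. -/
open Finset

/-- `squarefreeUnitaryPart n` is the largest square-free divisor `d` of `n` with
`gcd(d, n/d) = 1`, i.e. the product of the primes dividing `n` exactly once. -/
noncomputable def squarefreeUnitaryPart (n : ℕ) : ℕ :=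
  ∏ p ∈ n.primeFactors.filter (fun p => n.factorization p = 1), p

/-!
Every exponent `e ≠ 1` is `2k` or `3 + 2k`, so every `n ≥ 1` factors as `n = s a² b³` with
`s = f(n)`, and `n ↦ (a, b, s)` is injective. Hence
`∑_{n ≤ X} f(n)^{-1/4} ≤ ∑_{a, b} ∑_{s ≤ X/(a²b³)} s^{-1/4} ≪ X^{3/4} ∑_a a^{-3/2} ∑_b b^{-9/4}`,
and both series converge.
-/

theorem Finset.sum_comp_le_sum_of_injOn {ι κ M : Type*} [AddCommMonoid M] [PartialOrder M]
    [IsOrderedAddMonoid M] {s : Finset ι} {t : Finset κ} {g : ι → κ} (hg : Set.InjOn g s)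
    (hst : Set.MapsTo g s t) {w : κ → M} (hw : ∀ k ∈ t, 0 ≤ w k) :
    ∑ i ∈ s, w (g i) ≤ ∑ k ∈ t, w k := by
  classical
  rw [← sum_image hg]
  exact sum_le_sum_of_subset_of_nonneg (image_subset_iff.2 hst) fun k hk _ => hw k hk

section PartialSums

open Real

theorem rpow_sub_one_mul_le_rpow_sub_rpow {p : ℝ} (hp0 : 0 ≤ p) (hp1 : p ≤ 1) {x : ℝ}
    (hx : 0 ≤ x) : (x + 1) ^ (p - 1) * p ≤ (x + 1) ^ p - x ^ p := by
  set y := x + 1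
  have hy : 0 < y := by positivity
  have hy1 : y⁻¹ ≤ 1 := inv_le_one_of_one_le₀ (by linarith)
  have bernoulli : (1 + -y⁻¹) ^ p ≤ 1 + p * -y⁻¹ :=
    rpow_one_add_le_one_add_mul_self (by linarith) hp0 hp1
  have hxy : x = y * (1 + -y⁻¹) := by field_simp; ring
  calc (x + 1) ^ (p - 1) * p = y ^ p - y ^ p * (1 + p * -y⁻¹) := by
        rw [rpow_sub_one hy.ne']; field_simp; ring
    _ ≤ y ^ p - x ^ p := by
        rw [hxy, mul_rpow hy.le (by linarith)]
        gcongr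

theorem sum_Icc_rpow_sub_one_le {p : ℝ} (hp0 : 0 < p) (hp1 : p ≤ 1) (M : ℕ) :
    ∑ s ∈ Icc 1 M, (s : ℝ) ^ (p - 1) ≤ (M : ℝ) ^ p / p := by
  induction M with
  | zero => simp [zero_rpow hp0.ne']
  | succ M ih =>
    rw [sum_Icc_succ_top (by omega), le_div_iff₀ hp0, add_mul]
    have step := rpow_sub_one_mul_le_rpow_sub_rpow hp0.le hp1 (Nat.cast_nonneg M)
    push_cast
    linarith [(le_div_iff₀ hp0).1 ih]

theorem sum_Icc_floor_rpow_sub_one_le {p : ℝ} (hp0 : 0 < p) (hp1 : p ≤ 1) {Y : ℝ} (hY : 0 ≤ Y) :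
    ∑ s ∈ Icc 1 ⌊Y⌋₊, (s : ℝ) ^ (p - 1) ≤ Y ^ p / p :=
  (sum_Icc_rpow_sub_one_le hp0 hp1 _).trans <| by gcongr; exact Nat.floor_le hY

end PartialSums

def cubeExponent (e : ℕ) : ℕ := if e ≠ 1 ∧ e % 2 = 1 then 1 else 0

def squareExponent (e : ℕ) : ℕ := (e - 3 * cubeExponent e) / 2

theorem eq_ite_add_two_mul_squareExponent_add_three_mul_cubeExponent (e : ℕ) :
    e = (if e = 1 then 1 else 0) + 2 * squareExponent e + 3 * cubeExponent e := by
  unfold squareExponent cubeExponent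
  split_ifs <;> omega

def squarePart (n : ℕ) : ℕ := ∏ p ∈ n.primeFactors, p ^ squareExponent (n.factorization p)

def cubePart (n : ℕ) : ℕ := ∏ p ∈ n.primeFactors, p ^ cubeExponent (n.factorization p)

theorem eq_squarefreeUnitaryPart_mul_squarePart_sq_mul_cubePart_cube {n : ℕ} (hn : n ≠ 0) :
    n = squarefreeUnitaryPart n * squarePart n ^ 2 * cubePart n ^ 3 := by
  conv_lhs => rw [← Nat.prod_factorization_pow_eq_self hn]
  rw [Finsupp.prod, Nat.support_factorization, squarefreeUnitaryPart, prod_filter, squarePart,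
    cubePart, ← prod_pow, ← prod_pow, ← prod_mul_distrib, ← prod_mul_distrib]
  refine prod_congr rfl fun p _ => ?_
  conv_lhs => rw [eq_ite_add_two_mul_squareExponent_add_three_mul_cubeExponent
    (n.factorization p)]
  rw [pow_add, pow_add, pow_mul', pow_mul']
  split_ifs <;> simp

theorem sum_comp_squarefreeUnitaryPart_le {w : ℕ → ℝ} (hw : ∀ s, 0 ≤ w s) (N : ℕ) :
    ∑ n ∈ Icc 1 N, w (squarefreeUnitaryPart n) ≤
      ∑ a ∈ Icc 1 N, ∑ b ∈ Icc 1 N, ∑ s ∈ Icc 1 (N / (a ^ 2 * b ^ 3)), w s := by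
  let φ : ℕ → (_ : ℕ × ℕ) × ℕ := fun n => ⟨(squarePart n, cubePart n), squarefreeUnitaryPart n⟩
  have hφ {n : ℕ} (hn : n ∈ Icc 1 N) : n = (φ n).2 * (φ n).1.1 ^ 2 * (φ n).1.2 ^ 3 :=
    eq_squarefreeUnitaryPart_mul_squarePart_sq_mul_cubePart_cube (by grind)
  rw [← sum_product' (f := fun a b => ∑ s ∈ Icc 1 (N / (a ^ 2 * b ^ 3)), w s),
    sum_sigma' (f := fun _ s => w s)]
  refine sum_comp_le_sum_of_injOn (g := φ) (w := fun t => w t.2)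
    (fun m hm n hn hmn => by rw [hφ hm, hφ hn, hmn]) (fun n hn => ?_) fun _ _ => hw _
  have hn_eq := hφ hn
  obtain ⟨hn1, hnN⟩ := mem_Icc.1 hn
  set s := (φ n).2
  set a := (φ n).1.1
  set b := (φ n).1.2
  have hs0 : s ≠ 0 := by rintro h; simp [h] at hn_eq; omega
  have ha0 : a ≠ 0 := by rintro h; simp [h] at hn_eq; omega
  have hb0 : b ≠ 0 := by rintro h; simp [h] at hn_eq; omega
  have ha : a ≤ n := Nat.le_of_dvd hn1 ⟨s * a * b ^ 3, by rw [hn_eq]; ring⟩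
  have hb : b ≤ n := Nat.le_of_dvd hn1 ⟨s * a ^ 2 * b ^ 2, by rw [hn_eq]; ring⟩
  have hs : s * (a ^ 2 * b ^ 3) ≤ N := by rw [← mul_assoc, ← hn_eq]; exact hnN
  simp only [coe_sigma, Set.mem_sigma_iff, coe_product, Set.mem_prod, coe_Icc, Set.mem_Icc]
  exact ⟨⟨⟨by omega, by omega⟩, by omega, by omega⟩, by omega,
    (Nat.le_div_iff_mul_le (by positivity)).2 hs⟩

theorem div_sq_mul_cube_rpow_three_quarters {X : ℝ} (hX : 0 ≤ X) (a b : ℕ) :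
    (X / ((a ^ 2 * b ^ 3 : ℕ) : ℝ)) ^ ((3 : ℝ) / 4) =
      X ^ ((3 : ℝ) / 4) * ((a : ℝ) ^ (-(3 / 2) : ℝ) * (b : ℝ) ^ (-(9 / 4) : ℝ)) := by
  have ha := Nat.cast_nonneg (α := ℝ) a
  have hb := Nat.cast_nonneg (α := ℝ) b
  push_cast
  rw [Real.div_rpow hX (by positivity), Real.mul_rpow (by positivity) (by positivity),
    ← Real.rpow_natCast, ← Real.rpow_natCast, ← Real.rpow_mul ha, ← Real.rpow_mul hb,
    Real.rpow_neg ha, Real.rpow_neg hb, div_eq_mul_inv, mul_inv]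
  norm_num

/-- `∑_{n ≤ X} f(n)^{-1/4} ≪ X^{3/4}` with an absolute implied constant. -/
theorem sum_squarefreeUnitaryPart_rpow_neg_quarter :
    ∃ C : ℝ, 0 < C ∧ ∀ X : ℝ, 2 ≤ X →
      ∑ n ∈ Finset.Icc 1 ⌊X⌋₊, (squarefreeUnitaryPart n : ℝ) ^ (-(1/4 : ℝ))
        ≤ C * X ^ ((3:ℝ)/4) := by
  have summable {q : ℝ} (hq : 1 < q) : Summable fun n : ℕ => (n : ℝ) ^ (-q) :=
    Real.summable_nat_rpow.2 (by linarith)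
  have tsum_pos {q : ℝ} (hq : 1 < q) : 0 < ∑' n : ℕ, (n : ℝ) ^ (-q) :=
    (summable hq).tsum_pos (fun _ => by positivity) 1 (by simp)
  have := tsum_pos (q := 3 / 2) (by norm_num)
  have := tsum_pos (q := 9 / 4) (by norm_num)
  refine ⟨4 / 3 * ((∑' a : ℕ, (a : ℝ) ^ (-(3 / 2) : ℝ)) * ∑' b : ℕ, (b : ℝ) ^ (-(9 / 4) : ℝ)),
    by positivity, fun X hX => ?_⟩
  have hX0 : 0 ≤ X := by linarith
  have quarter : -(1 / 4 : ℝ) = 3 / 4 - 1 := by norm_num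
  calc ∑ n ∈ Icc 1 ⌊X⌋₊, (squarefreeUnitaryPart n : ℝ) ^ (-(1/4 : ℝ))
      ≤ ∑ a ∈ Icc 1 ⌊X⌋₊, ∑ b ∈ Icc 1 ⌊X⌋₊, ∑ s ∈ Icc 1 (⌊X⌋₊ / (a ^ 2 * b ^ 3)),
          (s : ℝ) ^ (-(1/4 : ℝ)) :=
        sum_comp_squarefreeUnitaryPart_le (w := fun s => (s : ℝ) ^ (-(1/4 : ℝ)))
          (fun _ => by positivity) _
    _ ≤ ∑ a ∈ Icc 1 ⌊X⌋₊, ∑ b ∈ Icc 1 ⌊X⌋₊,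
          4 / 3 * (X ^ ((3 : ℝ) / 4) * ((a : ℝ) ^ (-(3 / 2) : ℝ) * (b : ℝ) ^ (-(9 / 4) : ℝ))) := by
        gcongr with a _ b _
        rw [← Nat.floor_div_natCast, quarter, ← div_sq_mul_cube_rpow_three_quarters hX0]
        exact (sum_Icc_floor_rpow_sub_one_le (by norm_num) (by norm_num) (by positivity)).trans_eq
          (by ring)
    _ = 4 / 3 * ((∑ a ∈ Icc 1 ⌊X⌋₊, (a : ℝ) ^ (-(3 / 2) : ℝ)) *
          ∑ b ∈ Icc 1 ⌊X⌋₊, (b : ℝ) ^ (-(9 / 4) : ℝ)) * X ^ ((3 : ℝ) / 4) := by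
        rw [sum_mul_sum]
        simp only [mul_sum, sum_mul]
        exact sum_congr rfl fun _ _ => sum_congr rfl fun _ _ => by ring
    _ ≤ _ := by
        gcongr <;> exact (summable (by norm_num)).sum_le_tsum _ fun _ _ => by positivity
end

section
/- Let V : ℝ → ℂ be smooth and compactly supported in (0,∞), and define V†(r, s) = ∫_0^∞ V(x) e(−rx) x^{s−1} dx for r ∈ ℝ and s = σ + iτ ∈ ℂ. Then for each fixed σ and each integer j ≥ 0, V†(r, σ + iτ) ≪_{σ, j, V} min{1, ((1 + |r|)/|τ|)^{j}} for all τ ≠ 0. -/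
open MeasureTheory Complex Set
open scoped ContDiff

noncomputable def Efun (r x : ℝ) : ℂ := Complex.exp (-(2 * Real.pi * r * x) * Complex.I)

lemma Efun_hasDerivAt (r x : ℝ) :
    HasDerivAt (Efun r) ((-(2 * Real.pi * r : ℝ) : ℂ) * Complex.I * Efun r x) x := by
  have h0 : HasDerivAt (fun y : ℝ => (-(2 * Real.pi * r : ℝ) : ℂ) * Complex.I * (y : ℂ))
      ((-(2 * Real.pi * r : ℝ) : ℂ) * Complex.I) x := by
    simpa using (Complex.ofRealCLM.hasDerivAt (x := x)).const_mul
      ((-(2 * Real.pi * r : ℝ) : ℂ) * Complex.I)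
  have h1 := h0.cexp
  have heq : Efun r = fun y : ℝ =>
      Complex.exp ((-(2 * Real.pi * r : ℝ) : ℂ) * Complex.I * (y : ℂ)) := by
    funext y; unfold Efun; congr 1; push_cast; ring
  rw [heq]
  convert h1 using 1
  simp [mul_comm]

lemma Efun_norm (r x : ℝ) : ‖Efun r x‖ = 1 := by
  unfold Efun
  rw [Complex.norm_exp]
  norm_num [Complex.mul_I_re]

lemma Efun_continuous (r : ℝ) : Continuous (Efun r) := by
  unfold Efun; fun_prop

lemma cpow_norm {x : ℝ} (hx : 0 < x) (τ : ℝ) :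
    ‖(x : ℂ) ^ ((τ : ℂ) * Complex.I - 1)‖ = x⁻¹ := by
  rw [Complex.norm_cpow_eq_rpow_re_of_pos hx]
  norm_num [Real.rpow_neg_one]

lemma supp_Icc {W : ℝ → ℂ} (hc : HasCompactSupport W) (hs : tsupport W ⊆ Set.Ioi 0) :
    ∃ a b : ℝ, 0 < a ∧ tsupport W ⊆ Set.Icc a b := by
  rcases Set.eq_empty_or_nonempty (tsupport W) with h | h
  · exact ⟨1, 0, one_pos, by simp [h]⟩
  · refine ⟨sInf (tsupport W), sSup (tsupport W), hs (hc.sInf_mem h), fun x hx =>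
      ⟨csInf_le hc.isBounded.bddBelow hx, le_csSup hc.isBounded.bddAbove hx⟩⟩

lemma integrableOn_aux {g : ℝ → ℂ} (hg : Continuous g) {a b : ℝ} (ha : 0 < a)
    (hsupp : Function.support g ⊆ Set.Icc a b) (r : ℝ) (c : ℂ) :
    MeasureTheory.IntegrableOn (fun x : ℝ => g x * Efun r x * (x : ℂ) ^ c) (Set.Ioi 0) := by
  have hsub : Set.Icc a b ⊆ Set.Ioi 0 := fun x hx => lt_of_lt_of_le ha hx.1
  have hcont : ContinuousOn (fun x : ℝ => g x * Efun r x * (x : ℂ) ^ c) (Set.Ioi 0) := by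
    refine (hg.continuousOn.mul (Efun_continuous r).continuousOn).mul (fun x hx => ?_)
    exact ((continuousAt_cpow_const (Or.inl (by exact_mod_cast hx))).comp
      Complex.continuous_ofReal.continuousAt).continuousWithinAt
  have h1 : IntegrableOn (fun x : ℝ => g x * Efun r x * (x : ℂ) ^ c) (Set.Icc a b) :=
    (hcont.mono hsub).integrableOn_compact isCompact_Icc
  have h2 : Function.support (fun x : ℝ => g x * Efun r x * (x : ℂ) ^ c) ⊆ Set.Icc a b := by
    intro x hx
    refine hsupp ?_
    intro h0
    apply hx
    simp [h0]
  exact ((integrableOn_iff_integrable_of_support_subset h2).mp h1).integrableOn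

lemma ibp {W : ℝ → ℂ} (hW : ContDiff ℝ ∞ W) {a b : ℝ} (ha : 0 < a)
    (hab : tsupport W ⊆ Set.Icc a b) (r τ : ℝ) :
    (∫ x in Set.Ioi (0:ℝ),
        (deriv W x + (-(2 * Real.pi * r : ℝ) : ℂ) * Complex.I * W x) * Efun r x *
          (x : ℂ) ^ ((τ : ℂ) * Complex.I))
      + ((τ : ℂ) * Complex.I) *
        (∫ x in Set.Ioi (0:ℝ), W x * Efun r x * (x : ℂ) ^ ((τ : ℂ) * Complex.I - 1)) = 0 := by
  set c : ℂ := (τ : ℂ) * Complex.I with hc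
  set d : ℂ := (-(2 * Real.pi * r : ℝ) : ℂ) * Complex.I with hd
  set f : ℝ → ℂ := fun x => W x * Efun r x * (x : ℂ) ^ c with hf
  set G₁ : ℝ → ℂ := fun x => (deriv W x + d * W x) * Efun r x * (x : ℂ) ^ c with hG₁
  set G₂ : ℝ → ℂ := fun x => (c * W x) * Efun r x * (x : ℂ) ^ (c - 1) with hG₂
  have hWd : Differentiable ℝ W := hW.differentiable (by simp)
  have hW0 : W 0 = 0 := by
    apply image_eq_zero_of_notMem_tsupport
    intro h0
    have := (hab h0).1; linarith
  -- zero outside support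
  have hWz : ∀ x : ℝ, x ∉ Set.Icc a b → W x = 0 := fun x hx =>
    image_eq_zero_of_notMem_tsupport (fun h => hx (hab h))
  have hW'z : ∀ x : ℝ, x ∉ Set.Icc a b → deriv W x = 0 := by
    intro x hx
    by_contra h0
    exact hx (hab (support_deriv_subset h0))
  -- continuity at 0 within Ici 0
  have hcont : ContinuousWithinAt f (Set.Ici 0) 0 := by
    have hev : f =ᶠ[nhds (0:ℝ)] (fun _ => 0) := by
      filter_upwards [Iio_mem_nhds ha] with x hx
      simp [hf, hWz x (fun h => absurd h.1 (not_le.mpr hx))]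
    exact (Filter.EventuallyEq.continuousAt hev).continuousWithinAt
  -- derivative on Ioi 0
  have hderiv : ∀ x ∈ Set.Ioi (0:ℝ), HasDerivAt f (G₁ x + G₂ x) x := by
    intro x hx
    have hu : HasDerivAt (fun y => W y * Efun r y)
        (deriv W x * Efun r x + W x * (d * Efun r x)) x :=
      ((hWd x).hasDerivAt).mul (Efun_hasDerivAt r x)
    have hp : HasDerivAt (fun y : ℝ => (y : ℂ) ^ c) (c * (x : ℂ) ^ (c - 1)) x :=
      (Complex.hasStrictDerivAt_cpow_const
        (Or.inl (by exact_mod_cast hx))).hasDerivAt.comp_ofReal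
    have : HasDerivAt (fun y : ℝ => W y * Efun r y * (y : ℂ) ^ c) _ x := hu.mul hp
    convert this using 1
    simp only [hG₁, hG₂]
    ring
  -- tendsto 0 at top
  have htend : Filter.Tendsto f Filter.atTop (nhds 0) := by
    apply Filter.Tendsto.congr' _ tendsto_const_nhds
    filter_upwards [Filter.eventually_ge_atTop (b + 1)] with x hx
    simp [hf, hWz x (fun h => by linarith [h.2])]
  -- integrability
  have hsupp1 : Function.support (fun x => deriv W x + d * W x) ⊆ Set.Icc a b := by
    intro x hx
    by_contra h0
    apply hx
    simp [hWz x h0, hW'z x h0]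
  have hsupp2 : Function.support (fun x => c * W x) ⊆ Set.Icc a b := by
    intro x hx
    by_contra h0
    apply hx
    simp [hWz x h0]
  have hcont1 : Continuous (fun x => deriv W x + d * W x) :=
    (hW.continuous_deriv (by exact_mod_cast le_top)).add (continuous_const.mul hW.continuous)
  have hint1 : IntegrableOn G₁ (Set.Ioi 0) := integrableOn_aux hcont1 ha hsupp1 r c
  have hint2 : IntegrableOn G₂ (Set.Ioi 0) :=
    integrableOn_aux (continuous_const.mul hW.continuous) ha hsupp2 r (c - 1)
  have hint : IntegrableOn (fun x => G₁ x + G₂ x) (Set.Ioi 0) := hint1.add hint2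
  have key := integral_Ioi_of_hasDerivAt_of_tendsto hcont hderiv hint htend
  have hf0 : f 0 = 0 := by simp [hf, hW0]
  rw [hf0, sub_zero] at key
  rw [integral_add hint1 hint2] at key
  have h2 : ∫ x in Set.Ioi (0:ℝ), G₂ x
      = c * ∫ x in Set.Ioi (0:ℝ), W x * Efun r x * (x : ℂ) ^ (c - 1) := by
    rw [← integral_const_mul]
    congr 1; funext x; simp only [hG₂]; ring
  rw [h2] at key
  exact key

lemma tsupport_mul_fun {g : ℝ → ℂ} (h : ℝ → ℂ) :
    tsupport (fun x => h x * g x) ⊆ tsupport g :=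
  closure_mono (fun x hx => by
    simp only [Function.mem_support] at hx ⊢
    intro h0; exact hx (by simp [h0]))

lemma Jbound : ∀ (j : ℕ) (W : ℝ → ℂ), ContDiff ℝ ∞ W → HasCompactSupport W →
    tsupport W ⊆ Set.Ioi 0 →
    ∃ C : ℝ, 0 < C ∧ ∀ (r τ : ℝ), τ ≠ 0 →
      ‖∫ x in Set.Ioi (0:ℝ), W x * Efun r x * (x : ℂ) ^ ((τ : ℂ) * Complex.I - 1)‖
        ≤ C * ((1 + |r|) / |τ|) ^ j := by
  intro j
  induction j with
  | zero =>
    intro W hW hWc hWs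
    obtain ⟨a, b, ha, hab⟩ := supp_Icc hWc hWs
    have h0 : 0 ≤ ∫ x in Set.Ioi (0:ℝ), ‖W x‖ * x⁻¹ :=
      setIntegral_nonneg measurableSet_Ioi
        (fun x hx => mul_nonneg (norm_nonneg _) (inv_nonneg.mpr (le_of_lt hx)))
    refine ⟨(∫ x in Set.Ioi (0:ℝ), ‖W x‖ * x⁻¹) + 1, by linarith, ?_⟩
    intro r τ hτ
    rw [pow_zero, mul_one]
    calc ‖∫ x in Set.Ioi (0:ℝ), W x * Efun r x * (x : ℂ) ^ ((τ : ℂ) * Complex.I - 1)‖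
        ≤ ∫ x in Set.Ioi (0:ℝ), ‖W x * Efun r x * (x : ℂ) ^ ((τ : ℂ) * Complex.I - 1)‖ :=
          norm_integral_le_integral_norm _
      _ = ∫ x in Set.Ioi (0:ℝ), ‖W x‖ * x⁻¹ := by
          apply setIntegral_congr_fun measurableSet_Ioi
          intro x hx
          dsimp only
          rw [norm_mul, norm_mul, Efun_norm, cpow_norm hx]
          ring
      _ ≤ (∫ x in Set.Ioi (0:ℝ), ‖W x‖ * x⁻¹) + 1 := by linarith
  | succ j ih =>
    intro W hW hWc hWs
    obtain ⟨a, b, ha, hab⟩ := supp_Icc hWc hWs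
    set W₁ : ℝ → ℂ := fun x => (x : ℂ) * deriv W x with hW₁def
    set W₂ : ℝ → ℂ := fun x => (x : ℂ) * W x with hW₂def
    have hW'smooth : ContDiff ℝ ∞ (deriv W) := (contDiff_infty_iff_deriv.mp hW).2
    have hW₁smooth : ContDiff ℝ ∞ W₁ :=
      (Complex.ofRealCLM.contDiff).mul hW'smooth
    have hW₂smooth : ContDiff ℝ ∞ W₂ := (Complex.ofRealCLM.contDiff).mul hW
    have htsW' : tsupport (deriv W) ⊆ tsupport W :=
      closure_minimal support_deriv_subset (isClosed_tsupport W)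
    have htsW₁ : tsupport W₁ ⊆ tsupport W :=
      (tsupport_mul_fun (g := deriv W) _).trans htsW'
    have htsW₂ : tsupport W₂ ⊆ tsupport W := tsupport_mul_fun _
    have hW₁c : HasCompactSupport W₁ :=
      HasCompactSupport.of_support_subset_isCompact hWc
        ((subset_tsupport _).trans htsW₁)
    have hW₂c : HasCompactSupport W₂ :=
      HasCompactSupport.of_support_subset_isCompact hWc
        ((subset_tsupport _).trans htsW₂)
    obtain ⟨C₁, hC₁, h1⟩ := ih W₁ hW₁smooth hW₁c (htsW₁.trans hWs)
    obtain ⟨C₂, hC₂, h2⟩ := ih W₂ hW₂smooth hW₂c (htsW₂.trans hWs)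
    refine ⟨C₁ + 2 * Real.pi * C₂, by positivity, ?_⟩
    intro r τ hτ
    set c : ℂ := (τ : ℂ) * Complex.I with hc
    set d : ℂ := (-(2 * Real.pi * r : ℝ) : ℂ) * Complex.I with hd
    set J := ∫ x in Set.Ioi (0:ℝ), W x * Efun r x * (x : ℂ) ^ (c - 1) with hJdef
    set J₁ := ∫ x in Set.Ioi (0:ℝ), W₁ x * Efun r x * (x : ℂ) ^ (c - 1) with hJ₁def
    set J₂ := ∫ x in Set.Ioi (0:ℝ), W₂ x * Efun r x * (x : ℂ) ^ (c - 1) with hJ₂def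
    have key := ibp hW ha hab r τ
    have hJ : c * J = -(∫ x in Set.Ioi (0:ℝ),
        (deriv W x + d * W x) * Efun r x * (x : ℂ) ^ c) := by
      rw [eq_neg_iff_add_eq_zero, add_comm]
      exact key
    -- split the integral
    have hsupp1 : Function.support W₁ ⊆ Set.Icc a b :=
      fun x hx => hab (htsW₁ (subset_tsupport _ hx))
    have hsupp2 : Function.support W₂ ⊆ Set.Icc a b :=
      fun x hx => hab (htsW₂ (subset_tsupport _ hx))
    have hW₁cont : Continuous W₁ := hW₁smooth.continuous
    have hW₂cont : Continuous W₂ := hW₂smooth.continuous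
    have int1 : IntegrableOn (fun x : ℝ => W₁ x * Efun r x * (x : ℂ) ^ (c - 1))
        (Set.Ioi 0) := integrableOn_aux hW₁cont ha hsupp1 r (c - 1)
    have int2 : IntegrableOn (fun x : ℝ => W₂ x * Efun r x * (x : ℂ) ^ (c - 1))
        (Set.Ioi 0) := integrableOn_aux hW₂cont ha hsupp2 r (c - 1)
    have split : (∫ x in Set.Ioi (0:ℝ), (deriv W x + d * W x) * Efun r x * (x : ℂ) ^ c)
        = J₁ + d * J₂ := by
      rw [hJ₁def, hJ₂def, ← integral_const_mul, ← integral_add int1 (int2.const_mul d)]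
      apply setIntegral_congr_fun measurableSet_Ioi
      intro x hx
      have hx0 : (x : ℂ) ≠ 0 := by
        simpa using (ne_of_gt hx)
      have hcp : (x : ℂ) ^ c = (x : ℂ) * (x : ℂ) ^ (c - 1) := by
        conv_lhs => rw [show c = 1 + (c - 1) by ring]
        rw [Complex.cpow_add _ _ hx0, Complex.cpow_one]
      simp only [hW₁def, hW₂def, hcp]
      ring
    rw [split] at hJ
    -- norms
    have hτ0 : (0:ℝ) < |τ| := abs_pos.mpr hτ
    have hnc : ‖c‖ = |τ| := by
      simp [hc]
    have hnd : ‖d‖ = 2 * Real.pi * |r| := by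
      rw [hd, norm_mul, Complex.norm_I, mul_one, norm_neg, Complex.norm_real,
        Real.norm_eq_abs, abs_mul, abs_of_pos (by positivity : (0:ℝ) < 2 * Real.pi)]
    have hnorm : |τ| * ‖J‖ ≤ ‖J₁‖ + 2 * Real.pi * |r| * ‖J₂‖ := by
      have := congrArg norm hJ
      rw [norm_mul, hnc, norm_neg] at this
      rw [this]
      calc ‖J₁ + d * J₂‖ ≤ ‖J₁‖ + ‖d * J₂‖ := norm_add_le _ _
        _ = ‖J₁‖ + 2 * Real.pi * |r| * ‖J₂‖ := by rw [norm_mul, hnd]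
    set ρ := (1 + |r|) / |τ| with hρdef
    have hρ0 : 0 ≤ ρ := by positivity
    have hb1 : ‖J₁‖ ≤ C₁ * ρ ^ j := h1 r τ hτ
    have hb2 : ‖J₂‖ ≤ C₂ * ρ ^ j := h2 r τ hτ
    have hchain : |τ| * ‖J‖ ≤ (C₁ + 2 * Real.pi * C₂) * (1 + |r|) * ρ ^ j := by
      have hr0 : (0:ℝ) ≤ |r| := abs_nonneg r
      have hpj : (0:ℝ) ≤ ρ ^ j := pow_nonneg hρ0 j
      calc |τ| * ‖J‖ ≤ ‖J₁‖ + 2 * Real.pi * |r| * ‖J₂‖ := hnorm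
        _ ≤ C₁ * ρ ^ j + 2 * Real.pi * |r| * (C₂ * ρ ^ j) := by
            have := mul_le_mul_of_nonneg_left hb2 (by positivity : (0:ℝ) ≤ 2 * Real.pi * |r|)
            linarith
        _ ≤ (C₁ + 2 * Real.pi * C₂) * (1 + |r|) * ρ ^ j := by
            nlinarith [mul_nonneg (mul_nonneg hC₁.le hr0) hpj,
              mul_nonneg (mul_nonneg (mul_nonneg (by norm_num : (0:ℝ) ≤ 2)
                Real.pi_pos.le) hC₂.le) hpj]
    have hfinal : (C₁ + 2 * Real.pi * C₂) * (1 + |r|) * ρ ^ j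
        = |τ| * ((C₁ + 2 * Real.pi * C₂) * ρ ^ (j + 1)) := by
      rw [pow_succ, hρdef]
      field_simp
    rw [hfinal] at hchain
    have := (mul_le_mul_iff_right₀ hτ0).mp hchain
    exact this


/-- Bounds for `V†(r, σ+iτ) = ∫_0^∞ V(x) e(-rx) x^{σ+iτ-1} dx` for a smooth bump
`V` compactly supported in `(0,∞)`: for each fixed `σ` and `j`,
`V†(r, σ+iτ) ≪ min{1, ((1+|r|)/|τ|)^j}`. -/
theorem mellin_fourier_bump_bound (V : ℝ → ℂ) (hV : ContDiff ℝ (⊤ : ℕ∞) V)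
    (hVc : HasCompactSupport V) (hVsupp : tsupport V ⊆ Set.Ioi 0) :
    ∀ (σ : ℝ) (j : ℕ), ∃ C : ℝ, 0 < C ∧
      ∀ (r τ : ℝ), τ ≠ 0 →
        ‖∫ x in Set.Ioi (0:ℝ),
            V x * Complex.exp (-(2 * Real.pi * r * x) * Complex.I) *
              (x : ℂ) ^ ((σ : ℂ) + (τ : ℂ) * Complex.I - 1)‖
          ≤ C * min 1 (((1 + |r|) / |τ|) ^ j) := by
  intro σ j
  set W : ℝ → ℂ := fun x => V x * ((x ^ σ : ℝ) : ℂ) with hWdef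
  have hVsm : ContDiff ℝ ∞ V := hV.of_le (by simp)
  have hWsm : ContDiff ℝ ∞ W := by
    rw [contDiff_iff_contDiffAt]
    intro x
    by_cases hx : 0 < x
    · exact hVsm.contDiffAt.mul
        ((Complex.ofRealCLM.contDiff.contDiffAt).comp x
          (Real.contDiffAt_rpow_const_of_ne (ne_of_gt hx)))
    · have hx' : x ∉ tsupport V := fun h => hx (hVsupp h)
      have hev : W =ᶠ[nhds x] (fun _ => 0) := by
        filter_upwards [(isClosed_tsupport V).isOpen_compl.mem_nhds hx'] with y hy
        simp [hWdef, image_eq_zero_of_notMem_tsupport hy]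
      exact (contDiffAt_const (c := (0:ℂ))).congr_of_eventuallyEq hev
  have hsuppW : Function.support W ⊆ tsupport V := by
    intro x hx
    apply subset_tsupport V
    intro h0
    apply hx
    simp [hWdef, h0]
  have hWc : HasCompactSupport W :=
    HasCompactSupport.of_support_subset_isCompact hVc hsuppW
  have htsW : tsupport W ⊆ tsupport V :=
    closure_minimal hsuppW (isClosed_tsupport V)
  obtain ⟨C₀, hC₀, hb0⟩ := Jbound 0 W hWsm hWc (htsW.trans hVsupp)
  obtain ⟨Cj, hCj, hbj⟩ := Jbound j W hWsm hWc (htsW.trans hVsupp)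
  refine ⟨max C₀ Cj, lt_max_of_lt_left hC₀, ?_⟩
  intro r τ hτ
  have heq : (∫ x in Set.Ioi (0:ℝ),
      V x * Complex.exp (-(2 * Real.pi * r * x) * Complex.I) *
        (x : ℂ) ^ ((σ : ℂ) + (τ : ℂ) * Complex.I - 1))
      = ∫ x in Set.Ioi (0:ℝ), W x * Efun r x * (x : ℂ) ^ ((τ : ℂ) * Complex.I - 1) := by
    apply setIntegral_congr_fun measurableSet_Ioi
    intro x hx
    have hx0 : (x : ℂ) ≠ 0 := by simpa using (ne_of_gt hx)
    have h1 : (x : ℂ) ^ ((σ : ℂ) + (τ : ℂ) * Complex.I - 1)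
        = (x : ℂ) ^ (σ : ℂ) * (x : ℂ) ^ ((τ : ℂ) * Complex.I - 1) := by
      rw [show (σ : ℂ) + (τ : ℂ) * Complex.I - 1
        = (σ : ℂ) + ((τ : ℂ) * Complex.I - 1) by ring]
      exact Complex.cpow_add _ _ hx0
    have h2 : ((x ^ σ : ℝ) : ℂ) = (x : ℂ) ^ (σ : ℂ) := Complex.ofReal_cpow hx.le σ
    simp only [hWdef, Efun, h1, h2]
    ring
  rw [heq]
  have hρ0 : (0:ℝ) ≤ (1 + |r|) / |τ| := by positivity
  rcases min_cases 1 (((1 + |r|) / |τ|) ^ j) with ⟨hm, _⟩ | ⟨hm, _⟩ <;> rw [hm]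
  · rw [mul_one]
    calc ‖∫ x in Set.Ioi (0:ℝ), W x * Efun r x * (x : ℂ) ^ ((τ : ℂ) * Complex.I - 1)‖
        ≤ C₀ * ((1 + |r|) / |τ|) ^ 0 := hb0 r τ hτ
      _ = C₀ := by rw [pow_zero, mul_one]
      _ ≤ max C₀ Cj := le_max_left _ _
  · calc ‖∫ x in Set.Ioi (0:ℝ), W x * Efun r x * (x : ℂ) ^ ((τ : ℂ) * Complex.I - 1)‖
        ≤ Cj * ((1 + |r|) / |τ|) ^ j := hbj r τ hτ
      _ ≤ max C₀ Cj * ((1 + |r|) / |τ|) ^ j :=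
          mul_le_mul_of_nonneg_right (le_max_right _ _) (pow_nonneg hρ0 j)
end
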